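/- If X is a locally Lindelöf Hausdorff space, then |X| ≤ wL(X)^(ψ_c(X)·t(X)). -/

import Mathlib

open Cardinal Set

universe u

section Defs
variable (X : Type u) [TopologicalSpace X]

/-- An open cover of the whole space. -/
def IsOpenCover (𝒰 : Set (Set X)) : Prop := (∀ U ∈ 𝒰, IsOpen U) ∧ ⋃₀ 𝒰 = Set.univ

/-- The cellularity: supremum of cardinalities of pairwise disjoint families of nonempty
open sets, plus `ℵ₀`. -/
noncomputable def cellularity : Cardinal.{u} :=
  max ℵ₀ (⨆ 𝒰 : {𝒰 : Set (Set X) // (∀ U ∈ 𝒰, IsOpen U ∧ U.Nonempty) ∧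
    𝒰.PairwiseDisjoint id}, #𝒰.1)

/-- The weak Lindelöf degree. -/
noncomputable def wLdeg : Cardinal.{u} :=
  sInf {κ | ℵ₀ ≤ κ ∧ ∀ 𝒰 : Set (Set X), IsOpenCover X 𝒰 →
    ∃ 𝒱 ⊆ 𝒰, #𝒱 ≤ κ ∧ Dense (⋃₀ 𝒱)}

/-- The tightness. -/
noncomputable def tightness : Cardinal.{u} :=
  sInf {κ | ℵ₀ ≤ κ ∧ ∀ (A : Set X) (x : X), x ∈ closure A →
    ∃ B ⊆ A, #B ≤ κ ∧ x ∈ closure B}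

/-- The π-character. -/
noncomputable def piCharacter : Cardinal.{u} :=
  sInf {κ | ℵ₀ ≤ κ ∧ ∀ x : X, ∃ 𝒬 : Set (Set X), #𝒬 ≤ κ ∧
    (∀ P ∈ 𝒬, IsOpen P ∧ P.Nonempty) ∧
    ∀ U : Set X, IsOpen U → x ∈ U → ∃ P ∈ 𝒬, P ⊆ U}

/-- The pseudocharacter. -/
noncomputable def pseudoChar : Cardinal.{u} :=
  sInf {κ | ℵ₀ ≤ κ ∧ ∀ x : X, ∃ 𝒱 : Set (Set X), #𝒱 ≤ κ ∧
    (∀ V ∈ 𝒱, IsOpen V ∧ x ∈ V) ∧ ⋂₀ 𝒱 = {x}}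

/-- The closed pseudocharacter. -/
noncomputable def closedPseudoChar : Cardinal.{u} :=
  sInf {κ | ℵ₀ ≤ κ ∧ ∀ x : X, ∃ 𝒱 : Set (Set X), #𝒱 ≤ κ ∧
    (∀ V ∈ 𝒱, IsOpen V ∧ x ∈ V) ∧ (⋂ V ∈ 𝒱, closure V) = {x}}

/-- The density. -/
noncomputable def densityCard : Cardinal.{u} :=
  sInf {κ | ℵ₀ ≤ κ ∧ ∃ D : Set X, #D ≤ κ ∧ Dense D}

/-- The star of a set `A` with respect to a family `𝒰`. -/
def st (A : Set X) (𝒰 : Set (Set X)) : Set X := ⋃₀ {U | U ∈ 𝒰 ∧ (A ∩ U).Nonempty}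

/-- The θ-closure of a set. -/
def thetaClosure (A : Set X) : Set X :=
  {x | ∀ U : Set X, IsOpen U → x ∈ U → (closure U ∩ A).Nonempty}

/-- The θ-density. -/
noncomputable def thetaDensityCard : Cardinal.{u} :=
  sInf {κ | ℵ₀ ≤ κ ∧ ∃ D : Set X, #D ≤ κ ∧ thetaClosure X D = Set.univ}

/-- A discrete family of sets: each point has a neighborhood meeting at most one member. -/
def IsDiscreteFamily (𝒰 : Set (Set X)) : Prop :=
  ∀ x : X, ∃ V : Set X, IsOpen V ∧ x ∈ V ∧ {U | U ∈ 𝒰 ∧ (V ∩ U).Nonempty}.Subsingleton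

/-- Countable discrete cellularity. -/
def CDC : Prop :=
  ∀ 𝒰 : Set (Set X), (∀ U ∈ 𝒰, IsOpen U ∧ U.Nonempty) → IsDiscreteFamily X 𝒰 → 𝒰.Countable

/-- Star-cdc: every open cover has a cdc subspace whose star covers the space. -/
def StarCDC : Prop :=
  ∀ 𝒰 : Set (Set X), IsOpenCover X 𝒰 → ∃ Y : Set X, CDC ↥Y ∧ st X Y 𝒰 = Set.univ

/-- H-closed space: every open cover has a finite subfamily with dense union. -/
def IsHClosedSpace : Prop :=
  ∀ 𝒰 : Set (Set X), IsOpenCover X 𝒰 → ∃ 𝒱 ⊆ 𝒰, 𝒱.Finite ∧ Dense (⋃₀ 𝒱)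

/-- Countable cellularity (ccc). -/
def CCCSpace : Prop :=
  ∀ 𝒰 : Set (Set X), (∀ U ∈ 𝒰, IsOpen U ∧ U.Nonempty) → 𝒰.PairwiseDisjoint id → 𝒰.Countable

/-- Weakly Lindelöf space. -/
def WeaklyLindelof : Prop :=
  ∀ 𝒰 : Set (Set X), IsOpenCover X 𝒰 → ∃ 𝒱 ⊆ 𝒰, 𝒱.Countable ∧ Dense (⋃₀ 𝒱)

/-- Almost Lindelöf space. -/
def AlmostLindelof : Prop :=
  ∀ 𝒰 : Set (Set X), IsOpenCover X 𝒰 → ∃ 𝒱 ⊆ 𝒰, 𝒱.Countable ∧ (⋃ V ∈ 𝒱, closure V) = Set.univ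

/-- A π-base: a family of nonempty open sets such that every nonempty open set contains one. -/
def IsPiBase (ℬ : Set (Set X)) : Prop :=
  (∀ B ∈ ℬ, IsOpen B ∧ B.Nonempty) ∧
  ∀ U : Set X, IsOpen U → U.Nonempty → ∃ B ∈ ℬ, B ⊆ U

/-- Power homogeneous: some power of `X` is homogeneous. -/
def PowerHomogeneous : Prop :=
  ∃ ι : Type u, ∀ x y : ι → X, ∃ h : (ι → X) ≃ₜ (ι → X), h x = y

/-- A strong `G_δ`-diagonal of rank 2. -/
def HasStrongRank2Diagonal : Prop :=
  ∃ 𝒰 : ℕ → Set (Set X), (∀ n, IsOpenCover X (𝒰 n)) ∧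
    ∀ x : X, (⋂ n, closure (st X (st X {x} (𝒰 n)) (𝒰 n))) = {x}

/-- A `G_δ`-diagonal of rank 2. -/
def HasRank2Diagonal : Prop :=
  ∃ 𝒰 : ℕ → Set (Set X), (∀ n, IsOpenCover X (𝒰 n)) ∧
    ∀ x : X, (⋂ n, st X (st X {x} (𝒰 n)) (𝒰 n)) = {x}

/-- A `G_δ`-diagonal of rank 3. -/
def HasRank3Diagonal : Prop :=
  ∃ 𝒰 : ℕ → Set (Set X), (∀ n, IsOpenCover X (𝒰 n)) ∧
    ∀ x : X, (⋂ n, st X (st X (st X {x} (𝒰 n)) (𝒰 n)) (𝒰 n)) = {x}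

/-- Basically disconnected: the closure of every cozero set is open. -/
def BasicallyDisconnected : Prop :=
  ∀ f : C(X, ℝ), IsOpen (closure {x | f x ≠ 0})

end Defs

/-!
Write `κ = ψ_c(X) · t(X)`. Tightness and closed pseudocharacter bound the closure of any set `B`
by `|B|^κ`: a point `x ∈ cl B` is determined by choosing, for each of its `κ` neighbourhoods `V`,
a `κ`-small subset of `V ∩ B` accumulating at `x`.

For a Lindelöf subset `K`, an Arhangel'skii closing-off argument gives `H ⊆ K` with `|H| ≤ 2^κ`
containing the closure in `K` of each of its `κ`-small subsets, so `H` is Lindelöf by tightness,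
and containing a point of `K` outside the closures of any countable family of neighbourhoods of
points of `H` whose closures miss some point of `K`. Covering `H` by such a family avoiding a
point `q ∈ K \ H` is then impossible, so `K = H` and `|K| ≤ 2^κ`.

The interiors of Lindelöf neighbourhoods cover `X`, so `wL(X)` of them have a dense union `D`
with `|D| ≤ wL(X) · 2^κ`, and `|X| = |cl D| ≤ wL(X)^κ`.
-/

section ClosingOff

variable {α : Type u}

theorem Cardinal.mk_iUnion_le_mul {ι : Type u} {f : ι → Set α} {c : Cardinal.{u}}
    (h : ∀ i, #(f i) ≤ c) : #(⋃ i, f i) ≤ #ι * c :=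
  (mk_iUnion_le f).trans (mul_le_mul_right (ciSup_le' h) _)

theorem Cardinal.mk_biUnion_le_mul {ι : Type u} {A : ι → Set α} {s : Set ι} {c : Cardinal.{u}}
    (h : ∀ i ∈ s, #(A i) ≤ c) : #(⋃ i ∈ s, A i) ≤ #s * c := by
  rw [biUnion_eq_iUnion]
  exact mk_iUnion_le_mul fun i => h i i.2

theorem Cardinal.exists_forall_lt_of_mk_le_succ {κ : Cardinal.{u}} (hκ : ℵ₀ ≤ κ)
    (s : Set (Order.succ κ).ord.ToType) (hs : #s ≤ κ) : ∃ a, ∀ x ∈ s, x < a := by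
  refine not_isCofinal_iff.mp fun hcof => ?_
  have := (Order.cof_le hcof).trans hs
  rw [Ordinal.cof_toType, (isRegular_succ hκ).cof_ord] at this
  exact (Order.lt_succ_of_not_isMax (not_isMax κ)).not_ge this

variable (κ : Cardinal.{u}) (ψ : Set α → Set α)

noncomputable def closingOffStage : (Order.succ κ).ord.ToType → Set α := fun w =>
  ⋃ C ∈ {C : Set α | C ⊆ ⋃ v : Iio w, closingOffStage v ∧ #C ≤ κ}, ψ C
termination_by w => w
decreasing_by exact v.2

theorem closingOffStage_eq (w : (Order.succ κ).ord.ToType) :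
    closingOffStage κ ψ w =
      ⋃ C ∈ {C : Set α | C ⊆ ⋃ v : Iio w, closingOffStage κ ψ v ∧ #C ≤ κ}, ψ C := by
  rw [closingOffStage]

variable {κ ψ} {μ : Cardinal.{u}}

theorem mk_closingOffStage_le (hκ : ℵ₀ ≤ κ) (hκμ : κ < μ) (hμ : μ ^ κ ≤ μ)
    (hψ : ∀ C : Set α, #C ≤ κ → #(ψ C) ≤ μ) (w : (Order.succ κ).ord.ToType) :
    #(closingOffStage κ ψ w) ≤ μ := by
  have hμ0 : ℵ₀ ≤ μ := hκ.trans hκμ.le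
  induction w using WellFoundedLT.induction with
  | ind w ih =>
    rw [closingOffStage_eq]
    set S := ⋃ v : Iio w, closingOffStage κ ψ v
    have hIio : #(Iio w) ≤ κ := Order.lt_succ_iff.mp (by simpa using mk_Iio_lt w (by simp))
    have hS : #S ≤ μ := calc
      #S ≤ #(Iio w) * μ := mk_iUnion_le_mul fun v => ih v v.2
      _ ≤ μ * μ := mul_le_mul' (hIio.trans hκμ.le) le_rfl
      _ = μ := mul_eq_self hμ0
    have hsmall : #{C : Set α | C ⊆ S ∧ #C ≤ κ} ≤ μ := calc
      _ ≤ max #S ℵ₀ ^ κ := mk_bounded_subset_le S κ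
      _ ≤ μ ^ κ := power_le_power_right (max_le hS hμ0)
      _ ≤ μ := hμ
    calc _ ≤ #{C : Set α | C ⊆ S ∧ #C ≤ κ} * μ := mk_biUnion_le_mul fun C hC => hψ C hC.2
      _ ≤ μ * μ := mul_le_mul' hsmall le_rfl
      _ = μ := mul_eq_self hμ0

theorem exists_closed_under_small_subsets (hκ : ℵ₀ ≤ κ) (hκμ : κ < μ) (hμ : μ ^ κ ≤ μ)
    (hψ : ∀ C : Set α, #C ≤ κ → #(ψ C) ≤ μ) :
    ∃ H : Set α, #H ≤ μ ∧ H ⊆ ⋃ C, ψ C ∧ ∀ C ⊆ H, #C ≤ κ → ψ C ⊆ H := by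
  refine ⟨⋃ w, closingOffStage κ ψ w, ?_, ?_, ?_⟩
  · calc _ ≤ #(Order.succ κ).ord.ToType * μ :=
          mk_iUnion_le_mul (mk_closingOffStage_le hκ hκμ hμ hψ)
      _ = Order.succ κ * μ := by rw [mk_toType, card_ord]
      _ ≤ μ * μ := mul_le_mul' (Order.succ_le_of_lt hκμ) le_rfl
      _ = μ := mul_eq_self (hκ.trans hκμ.le)
  · refine iUnion_subset fun w => ?_
    rw [closingOffStage_eq]
    exact iUnion₂_subset fun C _ => subset_iUnion ψ C
  · intro C hCH hCκ
    have hstage : ∀ x : C, ∃ w, (x : α) ∈ closingOffStage κ ψ w := fun x =>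
      mem_iUnion.mp (hCH x.2)
    choose f hf using hstage
    obtain ⟨a, ha⟩ := exists_forall_lt_of_mk_le_succ hκ (range f) (mk_range_le.trans hCκ)
    have hCa : C ⊆ ⋃ v : Iio a, closingOffStage κ ψ v := fun x hx =>
      mem_iUnion.mpr ⟨⟨f ⟨x, hx⟩, ha _ (mem_range_self _)⟩, hf _⟩
    refine subset_iUnion_of_subset a ?_
    rw [closingOffStage_eq]
    exact subset_biUnion_of_mem (u := ψ) (show C ∈ {C | _ ∧ _} from ⟨hCa, hCκ⟩)

end ClosingOff

section Topology

variable {X : Type u} [TopologicalSpace X] {κ κ' : Cardinal.{u}}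

variable (X) in
def HasClosedPseudocharLE (κ : Cardinal.{u}) : Prop :=
  ∀ x : X, ∃ 𝒱 : Set (Set X), #𝒱 ≤ κ ∧ (∀ V ∈ 𝒱, IsOpen V ∧ x ∈ V) ∧ (⋂ V ∈ 𝒱, closure V) = {x}

variable (X) in
def HasTightnessLE (κ : Cardinal.{u}) : Prop :=
  ∀ (A : Set X) (x : X), x ∈ closure A → ∃ B ⊆ A, #B ≤ κ ∧ x ∈ closure B

theorem HasClosedPseudocharLE.mono (h : HasClosedPseudocharLE X κ) (hκ : κ ≤ κ') :
    HasClosedPseudocharLE X κ' := fun x =>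
  let ⟨𝒱, h𝒱κ, h𝒱⟩ := h x
  ⟨𝒱, h𝒱κ.trans hκ, h𝒱⟩

theorem HasTightnessLE.mono (h : HasTightnessLE X κ) (hκ : κ ≤ κ') : HasTightnessLE X κ' :=
  fun A x hx =>
  let ⟨B, hBA, hBκ, hxB⟩ := h A x hx
  ⟨B, hBA, hBκ.trans hκ, hxB⟩

theorem closedPseudoChar_spec [T2Space X] :
    ℵ₀ ≤ closedPseudoChar X ∧ HasClosedPseudocharLE X (closedPseudoChar X) := by
  refine csInf_mem (s := {κ | ℵ₀ ≤ κ ∧ HasClosedPseudocharLE X κ})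
    ⟨max ℵ₀ #(Set X), le_max_left _ _, fun x =>
      ⟨{V | IsOpen V ∧ x ∈ V}, (mk_set_le _).trans (le_max_right _ _), fun V hV => hV, ?_⟩⟩
  refine Subset.antisymm (fun y hy => ?_) (singleton_subset_iff.mpr
    (mem_iInter₂.mpr fun V hV => subset_closure hV.2))
  by_contra hyx
  obtain ⟨U, W, hU, hW, hxU, hyW, hUW⟩ := t2_separation (Ne.symm hyx)
  exact disjoint_left.mp (hUW.closure_left hW) (mem_iInter₂.mp hy U ⟨hU, hxU⟩) hyW

theorem tightness_spec : ℵ₀ ≤ tightness X ∧ HasTightnessLE X (tightness X) :=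
  csInf_mem (s := {κ | ℵ₀ ≤ κ ∧ HasTightnessLE X κ})
    ⟨max ℵ₀ #X, le_max_left _ _, fun A _ hx =>
      ⟨A, subset_rfl, (mk_set_le A).trans (le_max_right _ _), hx⟩⟩

theorem wLdeg_spec : ℵ₀ ≤ wLdeg X ∧ ∀ 𝒰 : Set (Set X), IsOpenCover X 𝒰 →
    ∃ 𝒱 ⊆ 𝒰, #𝒱 ≤ wLdeg X ∧ Dense (⋃₀ 𝒱) :=
  csInf_mem (s := {κ | ℵ₀ ≤ κ ∧ ∀ 𝒰 : Set (Set X), IsOpenCover X 𝒰 →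
    ∃ 𝒱 ⊆ 𝒰, #𝒱 ≤ κ ∧ Dense (⋃₀ 𝒱)}) ⟨max ℵ₀ #(Set X), le_max_left _ _, fun 𝒰 h𝒰 =>
    ⟨𝒰, subset_rfl, (mk_set_le 𝒰).trans (le_max_right _ _), h𝒰.2 ▸ dense_univ⟩⟩

theorem mk_closure_le (hκ : ℵ₀ ≤ κ) (hψ : HasClosedPseudocharLE X κ) (ht : HasTightnessLE X κ)
    (B : Set X) : #(closure B) ≤ max #B ℵ₀ ^ κ := by
  choose 𝒱 h𝒱κ h𝒱 h𝒱x using hψ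
  have hwitness : ∀ x ∈ closure B, ∀ V ∈ 𝒱 x, ∃ C ⊆ B, #C ≤ κ ∧ x ∈ closure C ∧ C ⊆ V := by
    intro x hx V hV
    have hxVB : x ∈ closure (V ∩ B) := (h𝒱 x V hV).1.inter_closure ⟨(h𝒱 x V hV).2, hx⟩
    obtain ⟨C, hCVB, hCκ, hxC⟩ := ht _ x hxVB
    exact ⟨C, hCVB.trans inter_subset_right, hCκ, hxC, hCVB.trans inter_subset_left⟩
  choose! g hgB hgκ hgx hgV using hwitness
  -- `x` is recovered from the family `g x '' 𝒱 x` as the only point in all the closures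
  have hinj : InjOn (fun x => g x '' 𝒱 x) (closure B) := by
    intro x hx y hy (hxy : g x '' 𝒱 x = g y '' 𝒱 y)
    have hyx : y ∈ ⋂ V ∈ 𝒱 x, closure V := mem_iInter₂.mpr fun V hV => by
      obtain ⟨V', hV', hV'V⟩ : g x V ∈ g y '' 𝒱 y := hxy ▸ mem_image_of_mem _ hV
      exact closure_mono (hgV x hx V hV) (hV'V ▸ hgx y hy V' hV')
    rw [h𝒱x x] at hyx
    exact hyx.symm
  set T : Set (Set X) := {C | C ⊆ B ∧ #C ≤ κ}
  have hT : #T ≤ max #B ℵ₀ ^ κ := mk_bounded_subset_le B κ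
  have himage : (fun x => g x '' 𝒱 x) '' closure B ⊆ {𝒲 | 𝒲 ⊆ T ∧ #𝒲 ≤ κ} := by
    rintro _ ⟨x, hx, rfl⟩
    exact ⟨image_subset_iff.mpr fun V hV => ⟨hgB x hx V hV, hgκ x hx V hV⟩,
      mk_image_le.trans (h𝒱κ x)⟩
  have hMκ : ℵ₀ ≤ max #B ℵ₀ ^ κ :=
    (le_max_right _ _).trans (self_le_power _ (one_le_aleph0.trans hκ))
  calc #(closure B) = #((fun x => g x '' 𝒱 x) '' closure B) :=
        (mk_image_eq_of_injOn _ _ hinj).symm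
    _ ≤ #{𝒲 | 𝒲 ⊆ T ∧ #𝒲 ≤ κ} := mk_le_mk_of_subset himage
    _ ≤ max #T ℵ₀ ^ κ := mk_bounded_subset_le T κ
    _ ≤ (max #B ℵ₀ ^ κ) ^ κ := power_le_power_right (max_le hT hMκ)
    _ = max #B ℵ₀ ^ κ := by rw [← power_mul, mul_eq_self hκ]

theorem IsLindelof.of_closure_inter_subset {H K : Set X} (hK : IsLindelof K) (hHK : H ⊆ K)
    (hH : closure H ∩ K ⊆ H) : IsLindelof H := by
  have hHeq : H = K ∩ closure H :=
    Subset.antisymm (subset_inter hHK subset_closure) fun x hx => hH ⟨hx.2, hx.1⟩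
  rw [hHeq]
  exact hK.inter_right isClosed_closure

theorem mk_closure_le_two_power (hκ : ℵ₀ ≤ κ) (hψ : HasClosedPseudocharLE X κ)
    (ht : HasTightnessLE X κ) {C : Set X} (hC : #C ≤ κ) : #(closure C) ≤ 2 ^ κ := calc
  _ ≤ max #C ℵ₀ ^ κ := mk_closure_le hκ hψ ht C
  _ ≤ κ ^ κ := power_le_power_right (max_le hC hκ)
  _ = 2 ^ κ := power_self_eq hκ

theorem IsLindelof.subset_of_forall_countable_diff_nonempty {H K : Set X} (hH : IsLindelof H)
    (𝒱 : X → Set (Set X)) (h𝒱 : ∀ x, ∀ V ∈ 𝒱 x, IsOpen V ∧ x ∈ V)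
    (h𝒱x : ∀ x, ⋂ V ∈ 𝒱 x, closure V = {x})
    (hK : ∀ C ⊆ H, C.Countable → ∀ 𝒲 ⊆ ⋃ y ∈ C, 𝒱 y,
      (K \ ⋃ V ∈ 𝒲, closure V).Nonempty → (H \ ⋃ V ∈ 𝒲, closure V).Nonempty) :
    K ⊆ H := by
  intro q hqK
  by_contra hqH
  have hsep : ∀ y ∈ H, ∃ V ∈ 𝒱 y, q ∉ closure V := fun y hy => by
    by_contra! hall
    have hqy : q ∈ ⋂ V ∈ 𝒱 y, closure V := mem_iInter₂.mpr hall
    rw [h𝒱x y, mem_singleton_iff] at hqy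
    exact hqH (hqy ▸ hy)
  choose! f hf𝒱 hfq using hsep
  obtain ⟨t, htc, htH, hHt⟩ := hH.elim_nhds_subcover f fun y hy =>
    (h𝒱 y _ (hf𝒱 y hy)).1.mem_nhds (h𝒱 y _ (hf𝒱 y hy)).2
  have hft : f '' t ⊆ ⋃ y ∈ t, 𝒱 y := by
    rintro _ ⟨y, hy, rfl⟩
    exact mem_biUnion hy (hf𝒱 y (htH y hy))
  have hq : (K \ ⋃ V ∈ f '' t, closure V).Nonempty := ⟨q, hqK, by
    simpa only [biUnion_image, mem_iUnion₂, not_exists] using fun y hy => hfq y (htH y hy)⟩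
  obtain ⟨z, hzH, hz⟩ := hK t htH htc (f '' t) hft hq
  obtain ⟨y, hyt, hzy⟩ := mem_iUnion₂.mp (hHt hzH)
  exact hz (mem_biUnion ⟨y, hyt, rfl⟩ (subset_closure hzy))

theorem mk_le_of_isLindelof (hκ : ℵ₀ ≤ κ) (hψ : HasClosedPseudocharLE X κ)
    (ht : HasTightnessLE X κ) {K : Set X} (hK : IsLindelof K) : #K ≤ 2 ^ κ := by
  rcases K.eq_empty_or_nonempty with rfl | ⟨k, -⟩
  · simp
  have hcl : ∀ C : Set X, #C ≤ κ → #(closure C) ≤ 2 ^ κ :=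
    fun _ => mk_closure_le_two_power hκ hψ ht
  choose 𝒱 h𝒱κ h𝒱 h𝒱x using hψ
  have hpick : ∀ 𝒲 : Set (Set X), ∃ p : X,
      (K \ ⋃ V ∈ 𝒲, closure V).Nonempty → p ∈ K \ ⋃ V ∈ 𝒲, closure V := fun 𝒲 =>
    (em _).elim (fun h => ⟨h.some, fun _ => h.some_mem⟩) fun h => ⟨k, fun h' => (h h').elim⟩
  choose p hp using hpick
  set Φ : Set X → Set X := fun C => K ∩ (closure C ∪ p '' 𝒫 (⋃ y ∈ C, 𝒱 y))
  have hΦ : ∀ C : Set X, #C ≤ κ → #(Φ C) ≤ 2 ^ κ := by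
    intro C hCκ
    have hpts : #(p '' 𝒫 (⋃ y ∈ C, 𝒱 y)) ≤ 2 ^ κ := by
      refine mk_image_le.trans ?_
      rw [mk_powerset]
      refine power_le_power_left two_ne_zero ((mk_biUnion_le_mul fun y _ => h𝒱κ y).trans ?_)
      exact (mul_le_mul' hCκ le_rfl).trans (mul_eq_self hκ).le
    calc #(Φ C) ≤ #(closure C) + #(p '' 𝒫 (⋃ y ∈ C, 𝒱 y)) :=
          (mk_le_mk_of_subset inter_subset_right).trans (mk_union_le _ _)
      _ ≤ 2 ^ κ + 2 ^ κ := add_le_add (hcl C hCκ) hpts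
      _ = 2 ^ κ := add_eq_self (hκ.trans (cantor κ).le)
  obtain ⟨H, hHcard, hHΦ, hHclosed⟩ := exists_closed_under_small_subsets hκ (cantor κ)
    (by rw [← power_mul, mul_eq_self hκ]) hΦ
  have hHK : H ⊆ K := hHΦ.trans (iUnion_subset fun C => inter_subset_left)
  have hHL : IsLindelof H := hK.of_closure_inter_subset hHK fun x ⟨hxH, hxK⟩ => by
    obtain ⟨C, hCH, hCκ, hxC⟩ := ht H x hxH
    exact hHclosed C hCH hCκ ⟨hxK, Or.inl hxC⟩
  refine (mk_le_mk_of_subset ?_).trans hHcard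
  refine hHL.subset_of_forall_countable_diff_nonempty 𝒱 h𝒱 h𝒱x fun C hCH hC 𝒲 h𝒲 hK𝒲 => ?_
  exact ⟨p 𝒲, hHclosed C hCH (hC.le_aleph0.trans hκ) ⟨(hp 𝒲 hK𝒲).1, Or.inr ⟨𝒲, h𝒲, rfl⟩⟩,
    (hp 𝒲 hK𝒲).2⟩

theorem mk_sUnion_le_of_subset_isLindelof (hκ : ℵ₀ ≤ κ) (hψ : HasClosedPseudocharLE X κ)
    (ht : HasTightnessLE X κ) {𝒱 : Set (Set X)} (h𝒱 : ∀ V ∈ 𝒱, ∃ K, IsLindelof K ∧ V ⊆ K) :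
    #(⋃₀ 𝒱) ≤ #𝒱 * 2 ^ κ := by
  refine (mk_sUnion_le 𝒱).trans (mul_le_mul' le_rfl (ciSup_le' fun V => ?_))
  obtain ⟨K, hK, hVK⟩ := h𝒱 V V.2
  exact (mk_le_mk_of_subset hVK).trans (mk_le_of_isLindelof hκ hψ ht hK)

end Topology

theorem stmt13 (X : Type u) [TopologicalSpace X] [T2Space X]
    (h : ∀ x : X, ∃ K ∈ nhds x, IsLindelof K) :
    #X ≤ wLdeg X ^ (closedPseudoChar X * tightness X) := by
  obtain ⟨hψ0, hψ⟩ := closedPseudoChar_spec (X := X)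
  obtain ⟨ht0, ht⟩ := tightness_spec (X := X)
  obtain ⟨hw0, hwL⟩ := wLdeg_spec (X := X)
  set κ := closedPseudoChar X * tightness X
  have hψκ : closedPseudoChar X ≤ κ := le_mul_of_one_le_right' (one_le_aleph0.trans ht0)
  have htκ : tightness X ≤ κ := le_mul_of_one_le_left' (one_le_aleph0.trans hψ0)
  have hκ : ℵ₀ ≤ κ := hψ0.trans hψκ
  replace hψ := hψ.mono hψκ
  replace ht := ht.mono htκ
  have hwκ : ℵ₀ ≤ wLdeg X ^ κ := hw0.trans (self_le_power _ (one_le_aleph0.trans hκ))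
  choose K hKx hK using h
  obtain ⟨𝒱, h𝒱, h𝒱w, hdense⟩ := hwL (range fun x => interior (K x))
    ⟨forall_mem_range.mpr fun _ => isOpen_interior, sUnion_eq_univ_iff.mpr fun x =>
      ⟨_, mem_range_self x, mem_interior_iff_mem_nhds.mpr (hKx x)⟩⟩
  have hD : #(⋃₀ 𝒱) ≤ wLdeg X ^ κ := calc
    _ ≤ #𝒱 * 2 ^ κ := mk_sUnion_le_of_subset_isLindelof hκ hψ ht fun V hV => by
        obtain ⟨x, rfl⟩ := h𝒱 hV
        exact ⟨K x, hK x, interior_subset⟩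
    _ ≤ wLdeg X ^ κ * wLdeg X ^ κ :=
        mul_le_mul' (h𝒱w.trans (self_le_power _ (one_le_aleph0.trans hκ)))
          (power_le_power_right (ofNat_le_aleph0.trans hw0))
    _ = wLdeg X ^ κ := mul_eq_self hwκ
  calc #X = #(closure (⋃₀ 𝒱)) := by rw [hdense.closure_eq, mk_univ]
    _ ≤ max #(⋃₀ 𝒱) ℵ₀ ^ κ := mk_closure_le hκ hψ ht _
    _ ≤ (wLdeg X ^ κ) ^ κ := power_le_power_right (max_le hD hwκ)
    _ = wLdeg X ^ κ := by rw [← power_mul, mul_eq_self hκ]
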